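/- Let Q be an exact Courant O-algebroid, ∇ a connection on Q, and β a 2-form. Then ∇ + β̃ (where β̃(ξ) = ι_ξβ) is again a connection, and its curvature satisfies c(∇ + β̃) = c(∇) + dβ. -/
import Mathlib


/-!
Courant `O`-algebroids (Bressler, "Vertex Algebroids I"), in the algebraic
setting: `O` is a commutative `k`-algebra, `T = Der_k(O)`, and `Ω¹ = Ω[O⁄k]`
is the module of Kähler differentials.
-/

/-- A Courant `O`-algebroid: an `O`-module `Q` with a Leibniz `k`-bracket, an
`O`-linear anchor `π : Q → Der(O)` which is a map of Leibniz algebras, a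
symmetric `O`-bilinear pairing, and a derivation `∂ : O → Q` with `π∘∂ = 0`,
satisfying the five axioms of the paper. -/
structure CourantAlgebroid (k O Q : Type*) [CommRing k] [CommRing O] [Algebra k O]
    [AddCommGroup Q] [Module k Q] [Module O Q] [IsScalarTower k O Q] where
  /-- the Leibniz bracket -/
  bracket : Q →ₗ[k] Q →ₗ[k] Q
  /-- the anchor -/
  anchor : Q →ₗ[O] Derivation k O O
  /-- the anchor is a map of Leibniz algebras -/
  anchor_bracket : ∀ q q', anchor (bracket q q') = ⁅anchor q, anchor q'⁆
  /-- the symmetric `O`-bilinear pairing -/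
  pair : Q →ₗ[O] Q →ₗ[O] O
  pair_symm : ∀ q q', pair q q' = pair q' q
  /-- the derivation `∂` -/
  d : O →ₗ[k] Q
  d_mul : ∀ f g, d (f * g) = f • d g + g • d f
  anchor_d : ∀ f, anchor (d f) = 0
  /-- `[q₁, f·q₂] = f·[q₁,q₂] + π(q₁)(f)·q₂` -/
  bracket_smul : ∀ (q : Q) (f : O) (q' : Q),
    bracket q (f • q') = f • bracket q q' + anchor q f • q'
  /-- `⟨[q,q₁],q₂⟩ + ⟨q₁,[q,q₂]⟩ = π(q)⟨q₁,q₂⟩` -/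
  invariance : ∀ q q₁ q₂, pair (bracket q q₁) q₂ + pair q₁ (bracket q q₂) =
    anchor q (pair q₁ q₂)
  /-- `[q, ∂f] = ∂(π(q)(f))` -/
  bracket_d : ∀ q f, bracket q (d f) = d (anchor q f)
  /-- `⟨q, ∂f⟩ = π(q)(f)` -/
  pair_d : ∀ q f, pair q (d f) = anchor q f
  /-- `[q₁,q₂] + [q₂,q₁] = ∂⟨q₁,q₂⟩` -/
  bracket_symm : ∀ q q', bracket q q' + bracket q' q = d (pair q q')

/-- An exact Courant `O`-algebroid: the sequence `0 → Ω¹ → Q → T → 0` given by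
the `O`-linear map `i` induced by `∂` and the anchor `π` is exact, `i` is
Lagrangian, and the induced pairing between `Ω¹` and `T` is the canonical
duality (which follows from `i_d` and `pair_d`). -/
structure ExactCourantAlgebroid (k O Q : Type*) [CommRing k] [CommRing O] [Algebra k O]
    [AddCommGroup Q] [Module k Q] [Module O Q] [IsScalarTower k O Q]
    extends CourantAlgebroid k O Q where
  /-- the `O`-linear map `Ω¹ → Q` induced by `∂` -/
  i : (Ω[O⁄k]) →ₗ[O] Q
  i_d : ∀ f, i (KaehlerDifferential.D k O f) = d f
  i_inj : Function.Injective i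
  /-- exactness in the middle: `ker π = im i` -/
  ker_anchor : ∀ q, anchor q = 0 ↔ q ∈ LinearMap.range i
  /-- exactness on the right: the anchor is surjective -/
  anchor_surj : Function.Surjective anchor
  /-- `i` is Lagrangian (isotropic) -/
  lagrangian : ∀ ω ω', pair (i ω) (i ω') = 0

variable {k O Q : Type*} [CommRing k] [CommRing O] [Algebra k O]
  [AddCommGroup Q] [Module k Q] [Module O Q] [IsScalarTower k O Q]

/-- The curvature 3-form of a connection `∇`: `c(∇)(ξ,ξ₁,ξ₂) =
ι_ξ([∇ξ₁,∇ξ₂] - ∇[ξ₁,ξ₂])`, the contraction being computed by the pairing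
via the duality `⟨i(ω), ∇ξ⟩ = ι_ξ ω`. -/
def ExactCourantAlgebroid.curv (E : ExactCourantAlgebroid k O Q)
    (del : Derivation k O O →ₗ[O] Q) (ξ ξ₁ ξ₂ : Derivation k O O) : O :=
  E.pair (E.bracket (del ξ₁) (del ξ₂) - del ⁅ξ₁, ξ₂⁆) (del ξ)

namespace ExactCourantAlgebroid

variable (E : ExactCourantAlgebroid k O Q)

lemma anchor_i (ω : Ω[O⁄k]) : E.anchor (E.i ω) = 0 :=
  (E.ker_anchor _).2 ⟨ω, rfl⟩

lemma pair_i (q : Q) (ω : Ω[O⁄k]) :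
    E.pair q (E.i ω) = (E.anchor q).liftKaehlerDifferential ω := by
  have : (E.pair q).comp E.i = (E.anchor q).liftKaehlerDifferential := by
    apply Derivation.liftKaehlerDifferential_unique
    ext f
    simp [E.i_d, E.pair_d]
  exact DFunLike.congr_fun this ω

lemma i_pair (q : Q) (ω : Ω[O⁄k]) :
    E.pair (E.i ω) q = (E.anchor q).liftKaehlerDifferential ω := by
  rw [E.pair_symm, E.pair_i]

lemma pair_bracket_i (q : Q) (ω : Ω[O⁄k]) (del : Derivation k O O →ₗ[O] Q)
    (hsec : ∀ ξ, E.anchor (del ξ) = ξ) (ξ : Derivation k O O) :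
    E.pair (E.bracket q (E.i ω)) (del ξ) =
      (E.anchor q) (ξ.liftKaehlerDifferential ω)
        - (⁅E.anchor q, ξ⁆ : Derivation k O O).liftKaehlerDifferential ω := by
  have hmem : ω ∈ Submodule.span O (Set.range <| KaehlerDifferential.D k O) := by
    rw [KaehlerDifferential.span_range_derivation]; trivial
  induction hmem using Submodule.span_induction with
  | mem x hx =>
      obtain ⟨f, rfl⟩ := hx
      rw [E.i_d, E.bracket_d]
      have h1 : E.pair (E.d (E.anchor q f)) (del ξ) = ξ (E.anchor q f) := by
        rw [E.pair_symm, E.pair_d, hsec]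
      rw [h1]
      simp [Derivation.commutator_apply]
  | zero => simp
  | add x y _ _ hx hy =>
      simp only [map_add, LinearMap.add_apply, hx, hy]; ring
  | smul g x _ hx =>
      have hb : E.bracket q (g • E.i x) =
          g • E.bracket q (E.i x) + E.anchor q g • E.i x := E.bracket_smul q g (E.i x)
      rw [map_smul, hb]
      simp only [map_add, map_smul, LinearMap.add_apply, LinearMap.smul_apply,
        smul_eq_mul, hx, E.i_pair, hsec, Derivation.leibniz]
      ring

end ExactCourantAlgebroid

/-- Let `∇` be a connection on an exact Courant algebroid and `β` a 2-form,
given as the `O`-linear map `β̃ : T → Ω¹`, `ξ ↦ ι_ξ β`, antisymmetric for the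
duality contraction `ι_η(β̃ ξ) = -ι_ξ(β̃ η)`. Then `∇ + β̃ : ξ ↦ ∇ξ + i(ι_ξ β)`
is again a connection, and `c(∇ + β̃) = c(∇) + dβ`, where
`β(ξ,η) = ι_η(ι_ξ β)` and `d` is the de Rham (Chevalley–Eilenberg) differential. -/
theorem ExactCourantAlgebroid.curv_add_two_form (E : ExactCourantAlgebroid k O Q)
    (del : Derivation k O O →ₗ[O] Q)
    (hsec : ∀ ξ, E.anchor (del ξ) = ξ)
    (hlag : ∀ ξ η, E.pair (del ξ) (del η) = 0)
    (B : Derivation k O O →ₗ[O] (Ω[O⁄k]))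
    (hB : ∀ ξ η : Derivation k O O,
      η.liftKaehlerDifferential (B ξ) = -ξ.liftKaehlerDifferential (B η)) :
    -- `∇ + β̃` is again a connection:
    (∀ ξ, E.anchor (del ξ + E.i (B ξ)) = ξ) ∧
    (∀ ξ η, E.pair (del ξ + E.i (B ξ)) (del η + E.i (B η)) = 0) ∧
    -- `c(∇ + β̃) = c(∇) + dβ`:
    (∀ ξ₀ ξ₁ ξ₂ : Derivation k O O,
      E.curv (del + E.i.comp B) ξ₀ ξ₁ ξ₂ =
      E.curv del ξ₀ ξ₁ ξ₂
        + (ξ₀ (ξ₂.liftKaehlerDifferential (B ξ₁))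
          - ξ₁ (ξ₂.liftKaehlerDifferential (B ξ₀))
          + ξ₂ (ξ₁.liftKaehlerDifferential (B ξ₀))
          - ξ₂.liftKaehlerDifferential (B ⁅ξ₀, ξ₁⁆)
          + ξ₁.liftKaehlerDifferential (B ⁅ξ₀, ξ₂⁆)
          - ξ₀.liftKaehlerDifferential (B ⁅ξ₁, ξ₂⁆))) := by
  have hanch : ∀ ξ, E.anchor (del ξ + E.i (B ξ)) = ξ := by
    intro ξ; rw [map_add, hsec, E.anchor_i, add_zero]
  have hlift0 : ∀ ω : Ω[O⁄k], (0 : Derivation k O O).liftKaehlerDifferential ω = 0 := by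
    intro ω
    have h0 : (0 : Derivation k O O).liftKaehlerDifferential = 0 :=
      Derivation.liftKaehlerDifferential_unique _ _ (by ext x; simp)
    rw [h0]; rfl
  refine ⟨hanch, ?_, ?_⟩
  · intro ξ η
    simp only [map_add, LinearMap.add_apply]
    rw [hlag, E.pair_i, E.i_pair, hsec, hsec, E.lagrangian, hB ξ η]
    ring
  · intro ξ₀ ξ₁ ξ₂
    simp only [ExactCourantAlgebroid.curv, LinearMap.add_apply, LinearMap.comp_apply]
    have hX : E.anchor (E.bracket (del ξ₁ + E.i (B ξ₁)) (del ξ₂ + E.i (B ξ₂))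
        - (del ⁅ξ₁, ξ₂⁆ + E.i (B ⁅ξ₁, ξ₂⁆))) = 0 := by
      simp only [map_sub, map_add, LinearMap.add_apply, E.anchor_bracket, hsec, E.anchor_i,
        zero_lie, lie_zero, add_zero, sub_self]
    rw [map_add (E.pair _), E.pair_i, hX, hlift0, add_zero]
    have hA : E.pair (E.bracket (del ξ₁) (E.i (B ξ₂))) (del ξ₀) =
        ξ₁ (ξ₀.liftKaehlerDifferential (B ξ₂))
          - (⁅ξ₁, ξ₀⁆ : Derivation k O O).liftKaehlerDifferential (B ξ₂) := by
      rw [E.pair_bracket_i _ _ del hsec, hsec]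
    have hC : E.pair (E.bracket (E.i (B ξ₁)) (del ξ₂)) (del ξ₀) =
        ξ₀ (ξ₂.liftKaehlerDifferential (B ξ₁))
          - (ξ₂ (ξ₀.liftKaehlerDifferential (B ξ₁))
            - (⁅ξ₂, ξ₀⁆ : Derivation k O O).liftKaehlerDifferential (B ξ₁)) := by
      have hs : E.bracket (E.i (B ξ₁)) (del ξ₂) =
          E.d (E.pair (E.i (B ξ₁)) (del ξ₂)) - E.bracket (del ξ₂) (E.i (B ξ₁)) := by
        rw [← E.bracket_symm]; abel
      rw [hs, map_sub, LinearMap.sub_apply, E.pair_symm (E.d _), E.pair_d, hsec,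
        E.pair_bracket_i _ _ del hsec, hsec, E.i_pair, hsec]
    have hD : E.pair (E.bracket (E.i (B ξ₁)) (E.i (B ξ₂))) (del ξ₀) = 0 := by
      rw [E.pair_bracket_i _ _ del hsec, E.anchor_i, zero_lie, hlift0]
      simp [hlift0]
    have hE : E.pair (E.i (B ⁅ξ₁, ξ₂⁆)) (del ξ₀) =
        ξ₀.liftKaehlerDifferential (B ⁅ξ₁, ξ₂⁆) := by
      rw [E.i_pair, hsec]
    simp only [map_add, map_sub, LinearMap.add_apply, LinearMap.sub_apply]
    rw [hA, hC, hD, hE]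
    have e1 : ξ₁ (ξ₀.liftKaehlerDifferential (B ξ₂)) =
        -ξ₁ (ξ₂.liftKaehlerDifferential (B ξ₀)) := by rw [hB ξ₂ ξ₀, map_neg]
    have e2 : (⁅ξ₁, ξ₀⁆ : Derivation k O O).liftKaehlerDifferential (B ξ₂) =
        ξ₂.liftKaehlerDifferential (B ⁅ξ₀, ξ₁⁆) := by
      rw [hB ξ₂ ⁅ξ₁, ξ₀⁆, ← lie_skew, map_neg, map_neg, neg_neg]
    have e3 : ξ₂ (ξ₀.liftKaehlerDifferential (B ξ₁)) =
        -ξ₂ (ξ₁.liftKaehlerDifferential (B ξ₀)) := by rw [hB ξ₁ ξ₀, map_neg]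
    have e4 : (⁅ξ₂, ξ₀⁆ : Derivation k O O).liftKaehlerDifferential (B ξ₁) =
        ξ₁.liftKaehlerDifferential (B ⁅ξ₀, ξ₂⁆) := by
      rw [hB ξ₁ ⁅ξ₂, ξ₀⁆, ← lie_skew, map_neg, map_neg, neg_neg]
    rw [e1, e2, e3, e4]
    ring
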